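/- arXiv:0811.2588 — 2 statements merged into one kernel-verified Lean document; each statement's English description precedes it below -/
import Mathlib

section
/- Let f be a Herglotz-Pick function on the double slit plane ℂ₁ = ℂ₊ ∪ ℂ₋ ∪ (-1,1), real and finite on (-1,1), with f(c₁) = c₃ where c₁ ∈ (-1,1) and f strictly increasing on (-1,1). Then for all x ∈ (-1,1) with x ≠ c₁: (1+c₁)/((x−c₁)(1+x)) ≤ f'(x)/(f(x)−c₃) ≤ (1−c₁)/((x−c₁)(1−x)). -/
open Complex Set

/-- The double slit plane `ℂ₁ = ℂ₊ ∪ ℂ₋ ∪ (-1,1)`. -/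
def doubleSlitPlane : Set ℂ := {z : ℂ | z.im ≠ 0 ∨ |z.re| < 1}

/-!
Let `K w = 2w/(1+w²)`, which maps the unit disk onto the double slit plane, and write `c₁ = K a`,
`x = K r` with `a, r ∈ (-1,1)`. For `Im w > 0` the function
`(1 - w)² / ((1 - w a)(w - a)) · (f (K w) - f (K a))` has nonpositive imaginary part: on the upper
unit semicircle the weight `(1 - w)² / ((1 - w a)(w - a))` is real and nonpositive while `Im f ≥ 0`,
on the real diameter everything is real, and the maximum principle carries this inside (applied to
`f (K (ρ w))` for `ρ < 1`, then `ρ → 1`). That function is a positive multiple of `G (K w)`, where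
`G z = (1 - z)/(z - c₁) · (f z - c₃)`. So `Im G ≤ 0` just above `x`, while `G` is real on `(-1,1)`;
hence `G'(x) ≤ 0`, which is the upper bound. The lower bound is the upper bound for `z ↦ -f(-z)`,
and strict monotonicity fixes the sign of `(f x - c₃)(x - c₁)` needed to divide by `f x - c₃`.
-/

open Metric Filter Topology ComplexConjugate

theorem isOpen_doubleSlitPlane : IsOpen doubleSlitPlane :=
  (isOpen_ne.preimage continuous_im).union
    (isOpen_lt (continuous_abs.comp continuous_re) continuous_const)

theorem ofReal_mem_doubleSlitPlane {x : ℝ} (hx : x ∈ Ioo (-1 : ℝ) 1) :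
    (x : ℂ) ∈ doubleSlitPlane :=
  Or.inr (by simpa [abs_lt] using hx)

theorem neg_mem_doubleSlitPlane {z : ℂ} (hz : z ∈ doubleSlitPlane) :
    -z ∈ doubleSlitPlane := by
  simpa [doubleSlitPlane] using hz

/-- The reciprocal of the Joukowski map; it sends the unit circle onto the slits,
`slitMap (exp (iθ)) = 1 / cos θ`. -/
noncomputable def slitMap (w : ℂ) : ℂ := 2 * w / (1 + w ^ 2)

theorem one_add_sq_ne_zero_of_norm_lt_one {w : ℂ} (hw : ‖w‖ < 1) : 1 + w ^ 2 ≠ 0 := by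
  intro h
  have : ‖w‖ ^ 2 = 1 := by
    rw [← norm_pow, show w ^ 2 = -1 by linear_combination h, norm_neg, norm_one]
  nlinarith [norm_nonneg w]

theorem slitMap_ofReal (a : ℝ) : slitMap a = ((2 * a / (1 + a ^ 2) : ℝ) : ℂ) := by
  simp [slitMap]

theorem im_slitMap (w : ℂ) :
    (slitMap w).im = 2 * w.im * (1 - ‖w‖ ^ 2) / normSq (1 + w ^ 2) := by
  rw [slitMap, div_im, ← normSq_eq_norm_sq]
  simp only [normSq_apply, pow_two, mul_re, mul_im]
  norm_num
  ring

theorem im_slitMap_pos {w : ℂ} (hw : ‖w‖ < 1) (him : 0 < w.im) : 0 < (slitMap w).im := by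
  rw [im_slitMap]
  have : 0 < 1 - ‖w‖ ^ 2 := by nlinarith [norm_nonneg w]
  have := normSq_pos.mpr (one_add_sq_ne_zero_of_norm_lt_one hw)
  positivity

theorem two_mul_div_one_add_sq_mem_Ioo {a : ℝ} (ha : a ∈ Ioo (-1 : ℝ) 1) :
    2 * a / (1 + a ^ 2) ∈ Ioo (-1 : ℝ) 1 := by
  obtain ⟨h₁, h₂⟩ := ha
  constructor
  · rw [lt_div_iff₀ (by positivity)]; nlinarith
  · rw [div_lt_iff₀ (by positivity)]; nlinarith

theorem slitMap_mem_doubleSlitPlane {w : ℂ} (hw : ‖w‖ < 1) : slitMap w ∈ doubleSlitPlane := by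
  by_cases him : w.im = 0
  · rw [← re_add_im w, him, ofReal_zero, zero_mul, add_zero, slitMap_ofReal]
    refine ofReal_mem_doubleSlitPlane (two_mul_div_one_add_sq_mem_Ioo ?_)
    rw [mem_Ioo, ← abs_lt]
    exact (abs_re_le_norm w).trans_lt hw
  · left
    rw [im_slitMap]
    have : 0 < 1 - ‖w‖ ^ 2 := by nlinarith [norm_nonneg w]
    have := normSq_pos.mpr (one_add_sq_ne_zero_of_norm_lt_one hw)
    positivity

theorem hasDerivAt_slitMap {w : ℂ} (hw : 1 + w ^ 2 ≠ 0) :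
    HasDerivAt slitMap (2 * (1 - w ^ 2) / (1 + w ^ 2) ^ 2) w := by
  have := ((hasDerivAt_id w).const_mul 2).div ((hasDerivAt_pow 2 w).const_add 1) hw
  exact this.congr_deriv (by simp only [id, Nat.cast_ofNat]; ring)

theorem exists_slitMap_eq {y : ℝ} (hy : y ∈ Ioo (-1 : ℝ) 1) :
    ∃ a ∈ Ioo (-1 : ℝ) 1, slitMap a = y := by
  have hs : 0 < 1 - y ^ 2 := by nlinarith [hy.1, hy.2]
  set s := √(1 - y ^ 2)
  have hs₀ : 0 < s := Real.sqrt_pos.mpr hs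
  have hs₂ : s ^ 2 = 1 - y ^ 2 := Real.sq_sqrt hs.le
  refine ⟨y / (1 + s), ⟨?_, ?_⟩, ?_⟩
  · rw [lt_div_iff₀ (by positivity)]; nlinarith [hy.1]
  · rw [div_lt_iff₀ (by positivity)]; nlinarith [hy.2]
  · rw [slitMap_ofReal, ofReal_inj]
    field_simp
    linear_combination (-y) * hs₂

theorem one_sub_slitMap_div_slitMap_sub {w a : ℂ} (hw : 1 + w ^ 2 ≠ 0) (ha : 1 + a ^ 2 ≠ 0) :
    (1 - slitMap w) / (slitMap w - slitMap a) =
      (1 + a ^ 2) / 2 * ((1 - w) ^ 2 / ((1 - w * a) * (w - a))) := by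
  have h₁ : 1 - slitMap w = (1 - w) ^ 2 / (1 + w ^ 2) := by
    rw [slitMap]; field_simp; ring
  have h₂ : slitMap w - slitMap a = 2 * ((1 - w * a) * (w - a)) / ((1 + w ^ 2) * (1 + a ^ 2)) := by
    rw [slitMap, slitMap]; field_simp; ring
  by_cases hd : (1 - w * a) * (w - a) = 0
  · simp [h₂, hd]
  rw [h₁, h₂]
  field_simp

theorem im_dslope_ofReal_eq_zero {Φ : ℂ → ℂ} {a s : ℝ} (hΦ : DifferentiableAt ℂ Φ a)
    (hreal : ∀ᶠ t : ℝ in 𝓝 a, (Φ t).im = 0) (hs : (Φ s).im = 0) : (dslope Φ a s).im = 0 := by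
  rcases eq_or_ne (s : ℂ) a with hsa | hsa
  · rw [hsa, dslope_same]
    have hderiv : HasDerivAt (fun t : ℝ ↦ (Φ t).im) (deriv Φ a).im a :=
      imCLM.hasFDerivAt.comp_hasDerivAt a hΦ.hasDerivAt.comp_ofReal
    exact hderiv.unique ((hasDerivAt_const a 0).congr_of_eventuallyEq hreal)
  · rw [dslope_of_ne _ hsa, slope_def_field, ← ofReal_sub, div_ofReal_im, sub_im, hs,
      hreal.self_of_nhds, sub_zero, zero_div]

theorem re_nonpos_of_im_nonpos_above {H : ℂ → ℂ} {d : ℂ} {r : ℝ} (hd : HasDerivAt H d r)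
    (hr : (H r).im = 0) (habove : ∀ᶠ t : ℝ in 𝓝[>] 0, (H (r + t * I)).im ≤ 0) :
    d.re ≤ 0 := by
  have hpath : HasDerivAt (fun t : ℝ ↦ (r : ℂ) + t * I) I 0 := by
    simpa using ((hasDerivAt_id (0 : ℂ)).comp_ofReal.mul_const I).const_add (r : ℂ)
  have hd₀ : HasDerivAt H d ((r : ℂ) + (0 : ℝ) * I) := by simpa using hd
  have hvert : HasDerivAt (fun t : ℝ ↦ (H (r + t * I)).im) (d * I).im 0 :=
    imCLM.hasFDerivAt.comp_hasDerivAt 0 (hd₀.comp 0 hpath)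
  have hslope : Tendsto (slope (fun t : ℝ ↦ (H (r + t * I)).im) 0) (𝓝[>] 0) (𝓝 (d * I).im) :=
    (hasDerivAt_iff_tendsto_slope.mp hvert).mono_left (nhdsWithin_mono 0 fun t ht ↦ ne_of_gt ht)
  have hle : ∀ᶠ t : ℝ in 𝓝[>] 0, slope (fun t : ℝ ↦ (H (r + t * I)).im) 0 t ≤ 0 := by
    filter_upwards [habove, self_mem_nhdsWithin] with t ht ht₀
    rw [slope_def_field]
    simpa [hr] using div_nonpos_of_nonpos_of_nonneg ht (le_of_lt ht₀)
  simpa using le_of_tendsto hslope hle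

theorem im_nonpos_of_forall_mem_frontier {U : Set ℂ} {Ψ : ℂ → ℂ} (hU : Bornology.IsBounded U)
    (hΨ : DiffContOnCl ℂ Ψ U) (hfr : ∀ z ∈ frontier U, (Ψ z).im ≤ 0) {z : ℂ}
    (hz : z ∈ closure U) : (Ψ z).im ≤ 0 := by
  -- `‖exp (-iΨ)‖ = exp (Im Ψ)` turns the maximum modulus principle into one for `Im Ψ`
  have hnorm : ∀ z, ‖exp (-(I * Ψ z))‖ = Real.exp (Ψ z).im := by simp [norm_exp]
  have hE : DiffContOnCl ℂ (fun z ↦ exp (-(I * Ψ z))) U :=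
    ⟨(hΨ.1.const_mul I).neg.cexp, (continuous_exp.comp_continuousOn (hΨ.2.const_smul I).neg)⟩
  have := norm_le_of_forall_mem_frontier_norm_le (C := 1) hU hE
    (fun z hz ↦ by simpa [hnorm] using hfr z hz) hz
  simpa [hnorm] using this

theorem im_nonpos_of_upperHalfDisk {Ψ : ℂ → ℂ}
    (hΨ : DiffContOnCl ℂ Ψ (ball 0 1 ∩ {z | 0 < z.im}))
    (hreal : ∀ a : ℝ, |a| ≤ 1 → (Ψ a).im = 0)
    (harc : ∀ w : ℂ, ‖w‖ = 1 → 0 < w.im → (Ψ w).im ≤ 0)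
    {w : ℂ} (hw : ‖w‖ < 1) (him : 0 < w.im) : (Ψ w).im ≤ 0 := by
  have hopen : IsOpen (ball (0 : ℂ) 1 ∩ {z | 0 < z.im}) :=
    isOpen_ball.inter (isOpen_lt continuous_const continuous_im)
  refine im_nonpos_of_forall_mem_frontier (isBounded_ball.subset inter_subset_left) hΨ
    (fun z hz ↦ ?_) (subset_closure ⟨by simpa using hw, him⟩)
  rw [hopen.frontier_eq] at hz
  obtain ⟨hzcl, hzU⟩ := hz
  have hzcl' := closure_inter_subset_inter_closure _ _ hzcl
  rw [closure_ball _ one_ne_zero, closure_setOfPred_lt_im] at hzcl'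
  obtain ⟨hz₁, hz₂⟩ := hzcl'
  rw [mem_closedBall_zero_iff] at hz₁
  rcases (show 0 ≤ z.im from hz₂).eq_or_lt' with hz₀ | hz₀
  · rw [← re_add_im z, hz₀, ofReal_zero, zero_mul, add_zero] at hz₁ ⊢
    exact (hreal z.re (by simpa using hz₁)).le
  · refine harc z (le_antisymm hz₁ ?_) hz₀
    by_contra! h
    exact hzU ⟨by simpa using h, hz₀⟩

theorem one_sub_mul_ofReal_ne_zero {w : ℂ} (hw : ‖w‖ ≤ 1) {a : ℝ} (ha : |a| < 1) :
    1 - w * a ≠ 0 := by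
  intro h
  have : ‖w * a‖ < 1 := by
    rw [norm_mul, norm_real, Real.norm_eq_abs]
    nlinarith [norm_nonneg w, abs_nonneg a]
  rw [← sub_eq_zero.mp h, norm_one] at this
  exact lt_irrefl _ this

theorem sq_div_eq_neg_normSq_div {w : ℂ} (hw : ‖w‖ = 1) {a : ℝ} (ha : |a| < 1) (hwa : w ≠ a) :
    (1 - w) ^ 2 / ((1 - w * a) * (w - a)) = ((-(normSq (1 - w) / normSq (w - a)) : ℝ) : ℂ) := by
  have hconj : w * conj w = 1 := by rw [mul_conj, normSq_eq_norm_sq, hw]; simp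
  have h₁ := one_sub_mul_ofReal_ne_zero hw.le ha
  have h₂ : w - a ≠ 0 := sub_ne_zero.mpr hwa
  have h₃ : conj w - a ≠ 0 := by
    rw [← conj_ofReal, ← map_sub]; exact (map_ne_zero _).mpr h₂
  push_cast
  rw [← mul_conj, ← mul_conj, map_sub, map_sub, map_one, conj_ofReal]
  field_simp
  linear_combination (-(1 - w) * (1 - a)) * hconj

theorem im_sq_div_mul_sub_nonpos {Φ : ℂ → ℂ} {R : ℝ} (hR : 1 < R)
    (hΦ : DifferentiableOn ℂ Φ (ball 0 R)) (hreal : ∀ s : ℝ, |s| ≤ 1 → (Φ s).im = 0)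
    (harc : ∀ w : ℂ, ‖w‖ = 1 → 0 < w.im → 0 ≤ (Φ w).im) {a : ℝ} (ha : |a| < 1)
    {w : ℂ} (hw : ‖w‖ < 1) (him : 0 < w.im) :
    ((1 - w) ^ 2 / ((1 - w * a) * (w - a)) * (Φ w - Φ a)).im ≤ 0 := by
  set Ψ : ℂ → ℂ := fun w ↦ (1 - w) ^ 2 / (1 - w * a) * dslope Φ a w with hΨ
  have hΨ_eq : ∀ w : ℂ, 0 < w.im →
      Ψ w = (1 - w) ^ 2 / ((1 - w * a) * (w - a)) * (Φ w - Φ a) := by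
    intro w hw
    have hwa : w ≠ a := fun h ↦ by simp [h] at hw
    simp only [hΨ, dslope_of_ne _ hwa, slope_def_field]
    rw [div_mul_div_comm, div_mul_eq_mul_div]
  have ha' : (a : ℂ) ∈ ball (0 : ℂ) R := by simpa using ha.trans hR
  have hdiff : DifferentiableOn ℂ Ψ (closedBall 0 1) := by
    refine DifferentiableOn.mul (fun z hz ↦ ?_)
      (((differentiableOn_dslope (isOpen_ball.mem_nhds ha')).mpr hΦ).mono
        (closedBall_subset_ball hR))
    have : DifferentiableAt ℂ (fun y : ℂ ↦ (1 - y) ^ 2 / (1 - y * a)) z :=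
      .div (by fun_prop) (by fun_prop) (one_sub_mul_ofReal_ne_zero (by simpa using hz) ha)
    exact this.differentiableWithinAt
  rw [← hΨ_eq w him]
  refine im_nonpos_of_upperHalfDisk (hdiff.mono ?_).diffContOnCl (fun s hs ↦ ?_)
    (fun z hz hzim ↦ ?_) hw him
  · exact (closure_mono inter_subset_left).trans (closure_ball 0 one_ne_zero).le
  · have hfac : (1 - (s : ℂ)) ^ 2 / (1 - s * a) = (((1 - s) ^ 2 / (1 - s * a) : ℝ) : ℂ) := by
      push_cast; rfl
    simp only [hΨ, hfac, im_ofReal_mul, mul_eq_zero]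
    refine .inr (im_dslope_ofReal_eq_zero (hΦ.differentiableAt (isOpen_ball.mem_nhds ha'))
      ?_ (hreal s hs))
    filter_upwards [Ioo_mem_nhds (abs_lt.mp ha).1 (abs_lt.mp ha).2] with t ht
    exact hreal t (abs_lt.mpr ht).le
  · have hza : z ≠ a := fun h ↦ by simp [h] at hzim
    rw [hΨ_eq z hzim, sq_div_eq_neg_normSq_div hz ha hza, im_ofReal_mul, sub_im, hreal a ha.le,
      sub_zero, neg_mul, neg_nonpos]
    exact mul_nonneg (div_nonneg (normSq_nonneg _) (normSq_nonneg _)) (harc z hz hzim)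

theorem im_sq_div_mul_sub_slitMap_nonpos {f : ℂ → ℂ} (hf : DifferentiableOn ℂ f doubleSlitPlane)
    (hreal : ∀ x : ℝ, x ∈ Ioo (-1 : ℝ) 1 → (f x).im = 0)
    (hup : ∀ z : ℂ, 0 < z.im → 0 ≤ (f z).im) {a : ℝ} (ha : a ∈ Ioo (-1 : ℝ) 1)
    {w : ℂ} (hw : ‖w‖ < 1) (him : 0 < w.im) :
    ((1 - w) ^ 2 / ((1 - w * a) * (w - a)) * (f (slitMap w) - f (slitMap a))).im ≤ 0 := by
  have hfK : ∀ v : ℂ, ‖v‖ < 1 → DifferentiableAt ℂ (fun v ↦ f (slitMap v)) v := fun v hv ↦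
    (hf.differentiableAt (isOpen_doubleSlitPlane.mem_nhds (slitMap_mem_doubleSlitPlane hv))).comp
      v (hasDerivAt_slitMap (one_add_sq_ne_zero_of_norm_lt_one hv)).differentiableAt
  have ha' : |a| < 1 := abs_lt.mpr ha
  -- `f ∘ slitMap` need not extend to the closed disk; dilating by `ρ < 1` makes it holomorphic
  -- on the ball of radius `ρ⁻¹`, and then we let `ρ → 1`.
  have hdil : ∀ ρ ∈ Ioo (0 : ℝ) 1,
      ((1 - w) ^ 2 / ((1 - w * a) * (w - a)) *
        (f (slitMap (ρ * w)) - f (slitMap (ρ * a)))).im ≤ 0 := by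
    rintro ρ ⟨hρ₀, hρ₁⟩
    have hnorm : ∀ v : ℂ, ‖(ρ : ℂ) * v‖ = ρ * ‖v‖ := fun v ↦ by
      rw [norm_mul, norm_real, Real.norm_of_nonneg hρ₀.le]
    refine im_sq_div_mul_sub_nonpos (Φ := fun v ↦ f (slitMap (ρ * v))) (R := ρ⁻¹)
      (one_lt_inv_iff₀.mpr ⟨hρ₀, hρ₁⟩) (fun v hv ↦ ?_) (fun s hs ↦ ?_) (fun v hv hvim ↦ ?_)
      ha' hw him
    · have hv' : ‖(ρ : ℂ) * v‖ < 1 := by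
        rw [hnorm, ← lt_div_iff₀' hρ₀, one_div]
        simpa using hv
      exact ((hfK _ hv').comp v (differentiableAt_id.const_mul _)).differentiableWithinAt
    · have hρs : ρ * s ∈ Ioo (-1 : ℝ) 1 := by
        rw [mem_Ioo, ← abs_lt, abs_mul, abs_of_pos hρ₀]
        nlinarith [abs_nonneg s]
      rw [← ofReal_mul, slitMap_ofReal]
      exact hreal _ (two_mul_div_one_add_sq_mem_Ioo hρs)
    · refine hup _ (im_slitMap_pos ?_ (by simpa using mul_pos hρ₀ hvim))
      rwa [hnorm, hv, mul_one]
  have hcont : ∀ v : ℂ, ‖v‖ < 1 → ContinuousAt (fun ρ : ℝ ↦ f (slitMap (ρ * v))) 1 := fun v hv ↦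
    (hfK v hv).continuousAt.comp_of_eq (by fun_prop) (by simp)
  have hlim : ContinuousAt (fun ρ : ℝ ↦ ((1 - w) ^ 2 / ((1 - w * a) * (w - a)) *
      (f (slitMap (ρ * w)) - f (slitMap (ρ * a)))).im) 1 :=
    continuous_im.continuousAt.comp
      (continuousAt_const.mul ((hcont w hw).sub (hcont a (by simpa using ha'))))
  simpa using le_of_tendsto (hlim.tendsto.mono_left nhdsWithin_le_nhds)
    (Filter.mem_of_superset (Ioo_mem_nhdsLT zero_lt_one) hdil)

theorem im_one_sub_div_mul_sub_slitMap_nonpos {f : ℂ → ℂ}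
    (hf : DifferentiableOn ℂ f doubleSlitPlane)
    (hreal : ∀ x : ℝ, x ∈ Ioo (-1 : ℝ) 1 → (f x).im = 0)
    (hup : ∀ z : ℂ, 0 < z.im → 0 ≤ (f z).im) {a : ℝ} (ha : a ∈ Ioo (-1 : ℝ) 1)
    {w : ℂ} (hw : ‖w‖ < 1) (him : 0 < w.im) :
    ((1 - slitMap w) / (slitMap w - slitMap a) * (f (slitMap w) - f (slitMap a))).im ≤ 0 := by
  rw [one_sub_slitMap_div_slitMap_sub (one_add_sq_ne_zero_of_norm_lt_one hw)
    (one_add_sq_ne_zero_of_norm_lt_one (by simpa [abs_lt] using ha)),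
    show (1 + (a : ℂ) ^ 2) / 2 = ((1 + a ^ 2) / 2 : ℝ) by push_cast; rfl, mul_assoc,
    im_ofReal_mul]
  exact mul_nonpos_of_nonneg_of_nonpos (by positivity)
    (im_sq_div_mul_sub_slitMap_nonpos hf hreal hup ha hw him)

theorem re_nonpos_of_hasDerivAt_one_sub_div_mul_sub {f : ℂ → ℂ}
    (hf : DifferentiableOn ℂ f doubleSlitPlane)
    (hreal : ∀ x : ℝ, x ∈ Ioo (-1 : ℝ) 1 → (f x).im = 0)
    (hup : ∀ z : ℂ, 0 < z.im → 0 ≤ (f z).im) {c₁ x : ℝ} (hc₁ : c₁ ∈ Ioo (-1 : ℝ) 1)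
    (hx : x ∈ Ioo (-1 : ℝ) 1) {G' : ℂ}
    (hG : HasDerivAt (fun z ↦ (1 - z) / (z - c₁) * (f z - f c₁)) G' x) : G'.re ≤ 0 := by
  obtain ⟨a, ha, hKa⟩ := exists_slitMap_eq hc₁
  obtain ⟨r, hr, hKr⟩ := exists_slitMap_eq hx
  set k : ℝ := 2 * (1 - r ^ 2) / (1 + r ^ 2) ^ 2
  have hk : 0 < k := by
    have : 0 < 1 - r ^ 2 := by nlinarith [hr.1, hr.2]
    positivity
  have hK : HasDerivAt slitMap (k : ℂ) r := by
    simpa [k] using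
      hasDerivAt_slitMap (one_add_sq_ne_zero_of_norm_lt_one (by simpa [abs_lt] using hr))
  rw [← hKr] at hG
  have hGK := hG.comp (r : ℂ) hK
  suffices (G' * k).re ≤ 0 by rw [re_mul_ofReal] at this; exact nonpos_of_mul_nonpos_left this hk
  refine re_nonpos_of_im_nonpos_above hGK ?_ ?_
  · rw [Function.comp_apply, hKr, show (1 - (x : ℂ)) / (x - c₁) = ((1 - x) / (x - c₁) : ℝ) by
      push_cast; rfl, im_ofReal_mul, sub_im, hreal x hx, hreal c₁ hc₁, sub_zero, mul_zero]
  · have hr₀ : 0 < 1 - |r| := by linarith [abs_lt.mpr hr]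
    filter_upwards [Ioo_mem_nhdsGT hr₀] with t ht
    have hw : ‖(r : ℂ) + t * I‖ < 1 := by
      refine (norm_add_le _ _).trans_lt ?_
      simp only [norm_real, Real.norm_eq_abs, norm_mul, norm_I, mul_one, abs_of_pos ht.1]
      linarith [ht.2]
    have him : 0 < ((r : ℂ) + t * I).im := by simpa using ht.1
    have := im_one_sub_div_mul_sub_slitMap_nonpos hf hreal hup ha hw him
    rwa [hKa] at this

theorem one_sub_div_mul_re_deriv_le {f : ℂ → ℂ} (hf : DifferentiableOn ℂ f doubleSlitPlane)
    (hreal : ∀ x : ℝ, x ∈ Ioo (-1 : ℝ) 1 → (f x).im = 0)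
    (hup : ∀ z : ℂ, 0 < z.im → 0 ≤ (f z).im) {c₁ x : ℝ} (hc₁ : c₁ ∈ Ioo (-1 : ℝ) 1)
    (hx : x ∈ Ioo (-1 : ℝ) 1) (hxc : x ≠ c₁) :
    (1 - x) / (x - c₁) * (deriv f x).re ≤ (1 - c₁) / (x - c₁) ^ 2 * ((f x).re - (f c₁).re) := by
  have hxc' : (x : ℂ) - c₁ ≠ 0 := sub_ne_zero.mpr (by exact_mod_cast hxc)
  have hfx : HasDerivAt f (deriv f x) x := (hf.differentiableAt
    (isOpen_doubleSlitPlane.mem_nhds (ofReal_mem_doubleSlitPlane hx))).hasDerivAt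
  have hG := (((hasDerivAt_id (x : ℂ)).const_sub 1).div
    ((hasDerivAt_id (x : ℂ)).sub_const (c₁ : ℂ)) hxc').mul (hfx.sub_const (f c₁))
  have hG' : HasDerivAt (fun z ↦ (1 - z) / (z - c₁) * (f z - f c₁))
      (((-(1 - c₁) / (x - c₁) ^ 2 : ℝ) : ℂ) * (f x - f c₁) +
        ((1 - x) / (x - c₁) : ℝ) * deriv f x) x :=
    hG.congr_deriv (by simp only [id, Pi.div_apply]; push_cast; ring)
  have := re_nonpos_of_hasDerivAt_one_sub_div_mul_sub hf hreal hup hc₁ hx hG'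
  simp only [add_re, re_ofReal_mul, sub_re, neg_div, neg_mul] at this
  linarith

theorem le_one_add_div_mul_re_deriv {f : ℂ → ℂ} (hf : DifferentiableOn ℂ f doubleSlitPlane)
    (hreal : ∀ x : ℝ, x ∈ Ioo (-1 : ℝ) 1 → (f x).im = 0)
    (hdown : ∀ z : ℂ, z.im < 0 → (f z).im ≤ 0) {c₁ x : ℝ} (hc₁ : c₁ ∈ Ioo (-1 : ℝ) 1)
    (hx : x ∈ Ioo (-1 : ℝ) 1) (hxc : x ≠ c₁) :
    (1 + c₁) / (x - c₁) ^ 2 * ((f x).re - (f c₁).re) ≤ (1 + x) / (x - c₁) * (deriv f x).re := by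
  have hneg : ∀ {y : ℝ}, y ∈ Ioo (-1 : ℝ) 1 → -y ∈ Ioo (-1 : ℝ) 1 := fun hy ↦
    ⟨by linarith [hy.2], by linarith [hy.1]⟩
  have := one_sub_div_mul_re_deriv_le (f := fun z ↦ -f (-z))
    (hf.comp differentiable_neg.differentiableOn fun z hz ↦ neg_mem_doubleSlitPlane hz).neg
    (fun y hy ↦ by simpa using hreal (-y) (hneg hy))
    (fun z hz ↦ by simpa using hdown (-z) (by simpa using hz)) (hneg hc₁) (hneg hx)
    (neg_injective.ne hxc)
  simp only [sub_neg_eq_add, ofReal_neg, deriv.fun_neg', deriv_comp_neg, neg_neg, neg_re] at this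
  rw [show -x + c₁ = -(x - c₁) by ring, div_neg, neg_sq] at this
  linarith

theorem div_le_div_mul_iff {A D u v p : ℝ} (hAu : 0 < A * u) (hv : 0 < v) :
    D / A ≤ p / (u * v) ↔ v / u * D ≤ p / u ^ 2 * A := by
  have hA : A ≠ 0 := by rintro rfl; simp at hAu
  have hu : u ≠ 0 := by rintro rfl; simp at hAu
  have key : D / A - p / (u * v) = u ^ 2 / (A * u * v) * (v / u * D - p / u ^ 2 * A) := by
    field_simp
  rw [← sub_nonpos, key, ← sub_nonpos (a := v / u * D)]
  exact smul_nonpos_iff_nonpos_of_pos_left (div_pos (by positivity) (mul_pos hAu hv))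

theorem div_mul_le_div_iff {A D u v p : ℝ} (hAu : 0 < A * u) (hv : 0 < v) :
    p / (u * v) ≤ D / A ↔ p / u ^ 2 * A ≤ v / u * D := by
  simpa only [neg_div, mul_neg, neg_mul, neg_le_neg_iff] using
    div_le_div_mul_iff (D := -D) (p := -p) hAu hv

/-- A-priori bounds on the logarithmic derivative `f'(x)/(f(x)−c₃)` of a
Herglotz-Pick function on the double slit plane, real and strictly increasing
on `(-1,1)`, with `f(c₁) = c₃`. -/
theorem herglotz_log_deriv_bounds
    (f : ℂ → ℂ) (hf : DifferentiableOn ℂ f doubleSlitPlane)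
    (hreal : ∀ x : ℝ, x ∈ Ioo (-1 : ℝ) 1 → (f x).im = 0)
    (hup : ∀ z : ℂ, 0 < z.im → 0 ≤ (f z).im)
    (hdown : ∀ z : ℂ, z.im < 0 → (f z).im ≤ 0)
    (g : ℝ → ℝ) (hg : ∀ x : ℝ, g x = (f x).re)
    (hmono : StrictMonoOn g (Ioo (-1 : ℝ) 1))
    (c₁ c₃ : ℝ) (hc₁ : c₁ ∈ Ioo (-1 : ℝ) 1) (h1 : g c₁ = c₃) :
    ∀ x ∈ Ioo (-1 : ℝ) 1, x ≠ c₁ →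
      (1 + c₁) / ((x - c₁) * (1 + x)) ≤ deriv g x / (g x - c₃) ∧
      deriv g x / (g x - c₃) ≤ (1 - c₁) / ((x - c₁) * (1 - x)) := by
  intro x hx hxc
  have hsign : 0 < (g x - c₃) * (x - c₁) := by
    rw [← h1]
    rcases hxc.lt_or_gt with h | h
    · exact mul_pos_of_neg_of_neg (sub_neg.mpr (hmono hx hc₁ h)) (sub_neg.mpr h)
    · exact mul_pos (sub_pos.mpr (hmono hc₁ hx h)) (sub_pos.mpr h)
  have hderiv : deriv g x = (deriv f x).re := by
    rw [show g = fun s : ℝ ↦ (f s).re from funext hg]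
    exact (hf.differentiableAt (isOpen_doubleSlitPlane.mem_nhds
      (ofReal_mem_doubleSlitPlane hx))).hasDerivAt.real_of_complex.deriv
  have hlower := le_one_add_div_mul_re_deriv hf hreal hdown hc₁ hx hxc
  have hupper := one_sub_div_mul_re_deriv_le hf hreal hup hc₁ hx hxc
  rw [← hg, ← hg, h1, ← hderiv] at hlower hupper
  exact ⟨(div_mul_le_div_iff hsign (by linarith [hx.1])).mpr hlower,
    (div_le_div_mul_iff hsign (by linarith [hx.2])).mpr hupper⟩
end

section
/- Let f : [c₂, 1] → ℝ be C¹ with f' convex on [c₂,1], f(c₂) = c₄, f'(c₂) = S, and f(1) ≤ M (i.e. sup bound M ≥ c₄ on f over [c₂,1] with ∫_{c₂}^1 f' ≤ M − c₄). Define K = 2(M−c₄)/(1−c₂)² − S/(1−c₂). Then for all x ∈ (c₂, 1): f(x) ≤ c₄ + S(x−c₂) + (M − c₄ − S(1−c₂))·(x−c₂)²/(1−c₂)². -/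
open Set intervalIntegral MeasureTheory

/-!
Let `g(y) = S + K (y - c₂)` be the line through `(c₂, S)` whose integral over `[c₂, 1]` equals
`M - c₄`; its primitive from `c₂` is the quadratic on the right-hand side. Since `f'` is convex
with `f'(c₂) = S`, the slope of `f'` from `c₂` is nondecreasing, so for a fixed `x` either
`f' ≤ g` on `[c₂, x]`, or `g ≤ f'` on `[x, 1]`. In the first case `∫_{c₂}^x f' ≤ ∫_{c₂}^x g`
directly; in the second it follows from `∫_{c₂}^1 f' ≤ M - c₄ = ∫_{c₂}^1 g`.
-/

namespace ConvexOn

variable {s : Set ℝ} {φ : ℝ → ℝ} {a x k : ℝ}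

theorem le_line_or_line_le (hφ : ConvexOn ℝ s φ) (ha : a ∈ s) (hx : x ∈ s) (hax : a < x) :
    (∀ y ∈ Icc a x, φ y ≤ φ a + k * (y - a)) ∨
      (∀ y ∈ s, x ≤ y → φ a + k * (y - a) ≤ φ y) := by
  have slope_mono : ∀ y ∈ s, ∀ z ∈ s, a < y → y ≤ z →
      (φ y - φ a) / (y - a) ≤ (φ z - φ a) / (z - a) := fun y hy z hz hay hyz =>
    hφ.secant_mono ha hy hz hay.ne' (hay.trans_le hyz).ne' hyz
  rcases le_total ((φ x - φ a) / (x - a)) k with hslope | hslope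
  · left
    rintro y ⟨hay, hyx⟩
    rcases hay.eq_or_lt with rfl | hay
    · simp
    have hy : y ∈ s := hφ.1.ordConnected.out ha hx ⟨hay.le, hyx⟩
    have := (slope_mono y hy x hx hay hyx).trans hslope
    rw [div_le_iff₀ (sub_pos.2 hay)] at this
    linarith
  · right
    intro y hy hxy
    have := hslope.trans (slope_mono x hx y hy hax hxy)
    rw [le_div_iff₀ (sub_pos.2 (hax.trans_le hxy))] at this
    linarith

end ConvexOn

theorem intervalIntegral.integral_le_of_le_left_or_ge_right {φ g : ℝ → ℝ} {a b x : ℝ}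
    (hax : a ≤ x) (hxb : x ≤ b)
    (hφ : IntervalIntegrable φ volume a b)
    (hg : IntervalIntegrable g volume a b)
    (htotal : (∫ y in a..b, φ y) ≤ ∫ y in a..b, g y)
    (hcross : (∀ y ∈ Icc a x, φ y ≤ g y) ∨ (∀ y ∈ Icc x b, g y ≤ φ y)) :
    (∫ y in a..x, φ y) ≤ ∫ y in a..x, g y := by
  have hx : x ∈ uIcc a b := by rw [uIcc_of_le (hax.trans hxb)]; exact ⟨hax, hxb⟩
  have hsub₁ : uIcc a x ⊆ uIcc a b := uIcc_subset_uIcc left_mem_uIcc hx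
  have hsub₂ : uIcc x b ⊆ uIcc a b := uIcc_subset_uIcc hx right_mem_uIcc
  rcases hcross with hle | hge
  · exact integral_mono_on hax (hφ.mono_set hsub₁) (hg.mono_set hsub₁) hle
  · have hright := integral_mono_on hxb (hg.mono_set hsub₂) (hφ.mono_set hsub₂) hge
    rw [← integral_add_adjacent_intervals (hφ.mono_set hsub₁) (hφ.mono_set hsub₂),
      ← integral_add_adjacent_intervals (hg.mono_set hsub₁) (hg.mono_set hsub₂)] at htotal
    linarith

namespace ContDiffOn

variable {f : ℝ → ℝ} {a b : ℝ}

theorem intervalIntegrable_deriv (hab : a ≤ b) (hf : ContDiffOn ℝ 1 f (Icc a b)) :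
    IntervalIntegrable (deriv f) volume a b := by
  rcases hab.eq_or_lt with rfl | hab
  · exact IntervalIntegrable.refl
  have hcont : ContinuousOn (derivWithin f (Icc a b)) (Icc a b) :=
    hf.continuousOn_derivWithin (uniqueDiffOn_Icc hab) le_rfl
  rw [intervalIntegrable_iff_integrableOn_Ioo_of_le hab.le]
  exact (hcont.integrableOn_Icc.mono_set Ioo_subset_Icc_self).congr_fun
    (fun y hy => derivWithin_of_mem_nhds (Icc_mem_nhds hy.1 hy.2)) measurableSet_Ioo

theorem integral_deriv_eq_sub (hab : a ≤ b) (hf : ContDiffOn ℝ 1 f (Icc a b)) :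
    (∫ y in a..b, deriv f y) = f b - f a :=
  integral_eq_sub_of_hasDeriv_right_of_le hab hf.continuousOn
    (fun y hy => ((hf.differentiableOn one_ne_zero y (Ioo_subset_Icc_self hy)).differentiableAt
      (Icc_mem_nhds hy.1 hy.2)).hasDerivAt.hasDerivWithinAt)
    (hf.intervalIntegrable_deriv hab)

end ContDiffOn

theorem integral_const_add_mul_sub (a x S K : ℝ) :
    (∫ y in a..x, S + K * (y - a)) = S * (x - a) + K * (x - a) ^ 2 / 2 := by
  rw [integral_add intervalIntegrable_const
      (((continuous_sub_right a).intervalIntegrable _ _).const_mul K),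
    intervalIntegral.integral_const_mul, integral_comp_sub_right (fun y => y),
    intervalIntegral.integral_const, integral_id, smul_eq_mul]
  ring

theorem quadratic_upper_bound_general
    (f : ℝ → ℝ) (c₂ c₄ S M : ℝ) (hc₂ : c₂ < 1)
    (hf : ContDiffOn ℝ 1 f (Icc c₂ 1))
    (hconv : ConvexOn ℝ (Icc c₂ 1) (deriv f))
    (hval : f c₂ = c₄) (hder : deriv f c₂ = S)
    (hint : (∫ y in c₂..1, deriv f y) ≤ M - c₄) :
    ∀ x ∈ Ioo c₂ 1,
      f x ≤ c₄ + S * (x - c₂) +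
        (M - c₄ - S * (1 - c₂)) * (x - c₂) ^ 2 / (1 - c₂) ^ 2 := by
  rintro x ⟨hc₂x, hx1⟩
  set K := 2 * (M - c₄ - S * (1 - c₂)) / (1 - c₂) ^ 2 with hK
  have h1c : 1 - c₂ ≠ 0 := (sub_pos.2 hc₂).ne'
  have hline_total : S * (1 - c₂) + K * (1 - c₂) ^ 2 / 2 = M - c₄ := by
    rw [hK]; field_simp; ring
  have hline_x :
      K * (x - c₂) ^ 2 / 2 = (M - c₄ - S * (1 - c₂)) * (x - c₂) ^ 2 / (1 - c₂) ^ 2 := by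
    rw [hK]; field_simp
  have hcross :=
    hconv.le_line_or_line_le (k := K) (left_mem_Icc.2 hc₂.le) ⟨hc₂x.le, hx1.le⟩ hc₂x
  rw [hder] at hcross
  have hbound := integral_le_of_le_left_or_ge_right hc₂x.le hx1.le
    (hf.intervalIntegrable_deriv hc₂.le)
    ((by fun_prop : Continuous fun y => S + K * (y - c₂)).intervalIntegrable _ _)
    (by rwa [integral_const_add_mul_sub, hline_total])
    (hcross.imp id fun h y hy => h y ⟨hc₂x.le.trans hy.1, hy.2⟩ hy.1)
  rw [(hf.mono (Icc_subset_Icc_right hx1.le)).integral_deriv_eq_sub hc₂x.le,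
    integral_const_add_mul_sub, hval] at hbound
  linarith

/-- Quadratic upper bound on `(c₂,1)` for a `C¹` function with convex
derivative, `f(c₂) = c₄`, `f'(c₂) = S`, and total increase on `[c₂,1]`
bounded by `M − c₄`. -/
theorem quadratic_upper_bound
    (f : ℝ → ℝ) (c₂ c₄ S M : ℝ) (hc₂ : c₂ < 1) (hS : 0 < S) (hM : c₄ ≤ M)
    (hf : ContDiffOn ℝ 1 f (Icc c₂ 1))
    (hconv : ConvexOn ℝ (Icc c₂ 1) (deriv f))
    (hval : f c₂ = c₄) (hder : deriv f c₂ = S)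
    (hint : (∫ y in c₂..1, deriv f y) ≤ M - c₄) :
    ∀ x ∈ Ioo c₂ 1,
      f x ≤ c₄ + S * (x - c₂) +
        (M - c₄ - S * (1 - c₂)) * (x - c₂) ^ 2 / (1 - c₂) ^ 2 :=
  quadratic_upper_bound_general f c₂ c₄ S M hc₂ hf hconv hval hder hint
end
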